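/- arXiv:0912.1644 — 5 statements merged into one kernel-verified Lean document; each statement's English description precedes it below -/
import Mathlib

section
/- Let E be a group, K a normal subgroup of E, and G = E/K the quotient group. Suppose E acts on the set K in such a way that the restricted action of K on itself is left translation (i.e., k · x = k*x for all k, x in K). Then the extension 1 → K → E → G → 1 splits: there exists a subgroup S of E with S ∩ K = {1} such that the quotient homomorphism E → G restricts to an isomorphism from S onto G. (Concretely, S may be taken to be the stabilizer in E of any point p ∈ K.) -/
/-!
For `p ∈ K`, the stabilizer `S` of `p` in `E` is a complement of `K`. Since `K` acts on itself by
left translation, it acts freely, so `S ∩ K = 1`; and it acts transitively, so for every `e ∈ E`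
the element `k = (e • p) * p⁻¹ ∈ K` satisfies `k⁻¹ * e ∈ S`, whence `E = K S`.
-/

open MulAction Subgroup

theorem Subgroup.bijective_mk'_restrict_of_isCompl {E : Type*} [Group E] {S K : Subgroup E}
    [K.Normal] (hSK : IsCompl S K) :
    Function.Bijective (fun s : S => QuotientGroup.mk' K (s : E)) :=
  (isComplement'_of_disjoint_and_mul_eq_univ hSK.disjoint
    (by rw [← mul_normal, hSK.sup_eq_top, coe_top])).QuotientMulEquiv.symm.bijective

namespace MulAction

variable {E : Type*} [Group E] {K : Subgroup E} [MulAction E K]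

theorem stabilizer_inf_eq_bot_of_smul_eq_mul (h : ∀ k x : K, (k : E) • x = k * x) (p : K) :
    stabilizer E p ⊓ K = ⊥ := by
  refine eq_bot_iff.mpr fun e ⟨hfix, he⟩ => ?_
  have hmul : (⟨e, he⟩ : K) * p = p := (h ⟨e, he⟩ p).symm.trans hfix
  exact congrArg Subtype.val (mul_eq_right.mp hmul)

theorem inv_mul_mem_stabilizer_of_smul_eq_mul (h : ∀ k x : K, (k : E) • x = k * x) (p : K)
    (e : E) : ((e • p * p⁻¹ : K) : E)⁻¹ * e ∈ stabilizer E p := by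
  rw [mem_stabilizer_iff, mul_smul, ← coe_inv, h]
  group

theorem stabilizer_sup_eq_top_of_smul_eq_mul (h : ∀ k x : K, (k : E) • x = k * x) (p : K) :
    stabilizer E p ⊔ K = ⊤ := by
  refine eq_top_iff.mpr fun e _ => sup_comm (stabilizer E p) K ▸ ?_
  simpa only [mul_inv_cancel_left] using
    mul_mem_sup (e • p * p⁻¹ : K).2 (inv_mul_mem_stabilizer_of_smul_eq_mul h p e)

theorem isCompl_stabilizer_of_smul_eq_mul (h : ∀ k x : K, (k : E) • x = k * x) (p : K) :
    IsCompl (stabilizer E p) K :=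
  ⟨disjoint_iff.mpr (stabilizer_inf_eq_bot_of_smul_eq_mul h p),
    codisjoint_iff.mpr (stabilizer_sup_eq_top_of_smul_eq_mul h p)⟩

end MulAction

/-- If a group `E` acts on (the underlying set of) its normal subgroup `K`
in such a way that the restricted action of `K` on itself is left translation, then the
extension `1 → K → E → E/K → 1` splits: there is a subgroup `S` of `E` meeting `K`
trivially such that the quotient map `E → E/K` restricts to a bijection (hence an
isomorphism) from `S` onto `E/K`. -/
theorem stmt0 {E : Type*} [Group E] (K : Subgroup E) [K.Normal]
    [MulAction E K] (h : ∀ k x : K, (k : E) • x = k * x) :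
    ∃ S : Subgroup E, S ⊓ K = ⊥ ∧
      Function.Bijective (fun s : S => QuotientGroup.mk' K (s : E)) :=
  ⟨stabilizer E 1, stabilizer_inf_eq_bot_of_smul_eq_mul h 1,
    bijective_mk'_restrict_of_isCompl (isCompl_stabilizer_of_smul_eq_mul h 1)⟩
end

section
/- Every finite 2-subgroup of GL₂(ℤ) (a finite subgroup whose order is a power of 2) is conjugate in GL₂(ℤ) to a subgroup of 𝒢₂ = ⟨[[−1,0],[0,1]], [[0,1],[1,0]]⟩, which is a dihedral group of order 8. -/
open Matrix

/-- The element `[[0,1],[1,0]]` of `GL₂(ℤ)`. -/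
def matS : GL (Fin 2) ℤ := ⟨!![0, 1; 1, 0], !![0, 1; 1, 0], by decide, by decide⟩

/-- The element `[[-1,0],[0,1]]` of `GL₂(ℤ)`. -/
def matR : GL (Fin 2) ℤ := ⟨!![-1, 0; 0, 1], !![-1, 0; 0, 1], by decide, by decide⟩

/-- The subgroup `𝒢₂ = ⟨[[-1,0],[0,1]], [[0,1],[1,0]]⟩` of `GL₂(ℤ)`. -/
def G2 : Subgroup (GL (Fin 2) ℤ) := Subgroup.closure {matR, matS}

/-!
Averaging `gᵀ g` over a finite `H ≤ GL₂(ℤ)` gives a positive definite integral form fixed by `H`,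
and a form of least trace in its `GL₂(ℤ)`-orbit is reduced: `0 ≤ 2b ≤ a ≤ c` for the form
`a x² + 2b xy + c y²`. The automorphisms of a reduced form have entries in `{-1, 0, 1}`, so they
can be listed. For the square form `a (x² + y²)` they make up `𝒢₂`, the orthogonal group of
`x² + y²`. For any other reduced form, those of determinant `1` have order dividing `6`, so only
`±1` can lie in a `2`-group, which is therefore `{±1, ±σ}` for a single reflection `σ`; and every
such reflection preserves `x² + y²`, `x² + 2xy + 2y²` or `2x² + 2xy + y²`, each of which is
`vᵀ v` for some `v ∈ GL₂(ℤ)`, so that its automorphism group is `v⁻¹ 𝒢₂ v`.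
-/

open MatrixGroups

lemma matR_mem_G2 : matR ∈ G2 := Subgroup.subset_closure (by simp)

lemma matS_mem_G2 : matS ∈ G2 := Subgroup.subset_closure (by simp)

/-- `matR * matS` is the rotation by a quarter turn. -/
def dihedralToGL : DihedralGroup 4 →* GL (Fin 2) ℤ where
  toFun
    | .r i => (matR * matS) ^ i.val
    | .sr i => matS * (matR * matS) ^ i.val
  map_one' := by decide
  map_mul' := by decide

lemma dihedralToGL_injective : Function.Injective dihedralToGL := by decide

lemma range_dihedralToGL : dihedralToGL.range = G2 := by
  apply le_antisymm
  · rintro _ ⟨_ | _, rfl⟩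
    · exact pow_mem (mul_mem matR_mem_G2 matS_mem_G2) _
    · exact mul_mem matS_mem_G2 (pow_mem (mul_mem matR_mem_G2 matS_mem_G2) _)
  · rw [G2, Subgroup.closure_le]
    rintro _ (rfl | rfl)
    · exact ⟨.sr 3, by decide⟩
    · exact ⟨.sr 0, by decide⟩

theorem nonempty_G2_mulEquiv_dihedralGroup : Nonempty (G2 ≃* DihedralGroup 4) :=
  ⟨((MonoidHom.ofInjective dihedralToGL_injective).trans
    (MulEquiv.subgroupCongr range_dihedralToGL)).symm⟩

section FormAut

variable {n R : Type*} [Fintype n] [CommRing R]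

lemma transpose_mul_mul_mul_mul (A B X : Matrix n n R) :
    Bᵀ * (Aᵀ * X * A) * B = (A * B)ᵀ * X * (A * B) := by
  simp only [transpose_mul, Matrix.mul_assoc]

variable [DecidableEq n]

def formAut (F : Matrix n n R) : Subgroup (GL n R) where
  carrier := {g | (g : Matrix n n R)ᵀ * F * g = F}
  one_mem' := by simp
  mul_mem' {g h} hg hh := by
    simp_all only [Set.mem_ofPred_eq, Units.val_mul, ← transpose_mul_mul_mul_mul]
  inv_mem' {g} hg := by
    simp only [Set.mem_ofPred_eq] at *
    conv_lhs => rw [← hg]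
    simp [transpose_mul_mul_mul_mul]

lemma mem_formAut {F : Matrix n n R} {g : GL n R} :
    g ∈ formAut F ↔ (g : Matrix n n R)ᵀ * F * g = F := Iff.rfl

lemma neg_mem_formAut {F : Matrix n n R} {g : GL n R} (hg : g ∈ formAut F) : -g ∈ formAut F := by
  simpa [mem_formAut] using hg

lemma conj_mem_formAut_iff {F : Matrix n n R} {g v : GL n R} :
    v * g * v⁻¹ ∈ formAut F ↔ g ∈ formAut ((v : Matrix n n R)ᵀ * F * (v : Matrix n n R)) := by
  rw [mem_formAut, mem_formAut, Units.val_mul, Units.val_mul, ← transpose_mul_mul_mul_mul,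
    ← transpose_mul_mul_mul_mul]
  constructor
  · intro h
    simpa [transpose_mul_mul_mul_mul] using congrArg (fun Y => (v : Matrix n n R)ᵀ * Y * v) h
  · intro h
    rw [h]
    simp [transpose_mul_mul_mul_mul]

lemma formAut_smul [IsDomain R] {F : Matrix n n R} {c : R} (hc : c ≠ 0) :
    formAut (c • F) = formAut F := by
  ext g
  simp [mem_formAut, smul_right_inj hc]

theorem exists_posDef_le_formAut [PartialOrder R] [StarRing R] [TrivialStar R] [StarOrderedRing R]
    [NoZeroDivisors R] (H : Subgroup (GL n R)) [Finite H] :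
    ∃ F : Matrix n n R, F.PosDef ∧ H ≤ formAut F := by
  have := Fintype.ofFinite H
  refine ⟨∑ h : H, ((h : GL n R) : Matrix n n R)ᵀ * (h : GL n R), ?_, fun k hk => ?_⟩
  · refine posDef_sum Finset.univ_nonempty fun h _ => ?_
    rw [← conjTranspose_eq_transpose_of_trivial]
    exact .conjTranspose_mul_self _ (mulVec_injective_of_isUnit (Units.isUnit _))
  · rw [mem_formAut, Finset.mul_sum, Finset.sum_mul]
    exact Fintype.sum_equiv (Equiv.mulRight ⟨k, hk⟩) _ _ fun h => by simp [Matrix.mul_assoc]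

end FormAut

lemma eq_one_or_eq_neg_one_of_det_eq_one_of_sq_eq_one {R : Type*} [CommRing R] [IsDomain R]
    [NeZero (2 : R)] {g : GL (Fin 2) R} (hdet : GeneralLinearGroup.det g = 1) (hg : g ^ 2 = 1) :
    g = 1 ∨ g = -1 := by
  obtain ⟨p, q, r, s, hpqrs⟩ : ∃ p q r s : R, (g : Matrix (Fin 2) (Fin 2) R) = !![p, q; r, s] :=
    ⟨_, _, _, _, eta_fin_two _⟩
  have hdet : p * s - q * r = 1 := by
    simpa [← det_fin_two_of, ← hpqrs] using congrArg Units.val hdet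
  have hg : !![p, q; r, s] * !![p, q; r, s] = !![1, 0; 0, 1] := by
    rw [← hpqrs, ← Units.val_mul, ← sq, hg, Units.val_one, one_fin_two]
  rw [mul_fin_two] at hg
  have e₁ := congr_fun₂ hg 0 0
  have e₂ := congr_fun₂ hg 0 1
  have e₃ := congr_fun₂ hg 1 0
  have e₄ := congr_fun₂ hg 1 1
  simp only [of_apply, cons_val', cons_val_zero, cons_val_one, empty_val', cons_val_fin_one]
    at e₁ e₂ e₃ e₄
  -- Cayley–Hamilton: `g² = (tr g) g - 1`, so `(tr g) g = 2`
  have hp : (p + s) * p = 2 := by linear_combination e₁ + hdet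
  have hs : (p + s) * s = 2 := by linear_combination e₄ + hdet
  have htr : p + s ≠ 0 := fun h => two_ne_zero (hp.symm.trans (by rw [h, zero_mul]))
  have hq : q = 0 := (mul_eq_zero.1 (by linear_combination e₂ : (p + s) * q = 0)).resolve_left htr
  have hr : r = 0 := (mul_eq_zero.1 (by linear_combination e₃ : (p + s) * r = 0)).resolve_left htr
  have hsp : s = p := by
    have := (mul_eq_zero.1 (by linear_combination hs - hp : (p + s) * (s - p) = 0)).resolve_left htr
    exact sub_eq_zero.1 this
  subst q r s
  have hp1 : p * p = 1 := by linear_combination e₁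
  rcases mul_self_eq_one_iff.1 hp1 with rfl | rfl
  · left; ext1; rw [hpqrs, Units.val_one, one_fin_two]
  · right; ext1; rw [hpqrs, Units.val_neg, Units.val_one, one_fin_two]; simp

lemma sq_eq_one_of_pow_six_eq_one {G : Type*} [Monoid G] {x : G} (h6 : x ^ 6 = 1) {k : ℕ}
    (hk : x ^ 2 ^ k = 1) : x ^ 2 = 1 := by
  obtain ⟨m, -, hm⟩ := (Nat.dvd_prime_pow Nat.prime_two).1 (orderOf_dvd_of_pow_eq_one hk)
  have h6 := orderOf_dvd_of_pow_eq_one h6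
  rw [← orderOf_dvd_iff_pow_eq_one, hm]
  rw [hm] at h6
  refine pow_one 2 ▸ Nat.pow_dvd_pow 2 (not_lt.1 fun hm2 => ?_)
  have := (Nat.pow_dvd_pow 2 hm2).trans h6
  norm_num at this

lemma transpose_fin_two {α : Type*} (a b c d : α) : !![a, b; c, d]ᵀ = !![a, c; b, d] := by
  ext i j; fin_cases i <;> fin_cases j <;> rfl

lemma transpose_mul_mul_fin_two {R : Type*} [CommRing R] (a b c p q r s : R) :
    !![p, q; r, s]ᵀ * !![a, b; b, c] * !![p, q; r, s] =
      !![a * p * p + 2 * b * p * r + c * r * r, a * p * q + b * (p * s + q * r) + c * r * s;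
        a * p * q + b * (p * s + q * r) + c * r * s, a * q * q + 2 * b * q * s + c * s * s] := by
  rw [transpose_fin_two, mul_fin_two, mul_fin_two]
  ext i j; fin_cases i <;> fin_cases j <;> simp <;> ring

lemma coe_matS : (matS : Matrix (Fin 2) (Fin 2) ℤ) = !![0, 1; 1, 0] := rfl

lemma coe_matR : (matR : Matrix (Fin 2) (Fin 2) ℤ) = !![-1, 0; 0, 1] := rfl

lemma matS_transpose_mul_mul (a b c : ℤ) :
    (matS : Matrix (Fin 2) (Fin 2) ℤ)ᵀ * !![a, b; b, c] * matS = !![c, b; b, a] := by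
  simp [coe_matS, transpose_mul_mul_fin_two]

lemma matR_transpose_mul_mul (a b c : ℤ) :
    (matR : Matrix (Fin 2) (Fin 2) ℤ)ᵀ * !![a, b; b, c] * matR = !![a, -b; -b, c] := by
  simp [coe_matR, transpose_mul_mul_fin_two]

/-- Reducedness of the form `a x² + 2 b x y + c y²`, whose Gram matrix is `!![a, b; b, c]`. -/
def IsReducedForm (a b c : ℤ) : Prop := 0 < a ∧ 0 ≤ b ∧ 2 * b ≤ a ∧ a ≤ c

lemma two_mul_abs_le_of_trace_le {a b c : ℤ}
    (hmin : ∀ h : GL (Fin 2) ℤ, (!![a, b; b, c]).trace ≤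
      ((h : Matrix (Fin 2) (Fin 2) ℤ)ᵀ * !![a, b; b, c] * h).trace) :
    2 * |b| ≤ a ∧ 2 * |b| ≤ c := by
  have shear (t : ℤ) := hmin (ModularGroup.T ^ t : SL(2, ℤ))
  have swap_shear (t : ℤ) := hmin (matS * (ModularGroup.T ^ t : SL(2, ℤ)))
  simp only [SpecialLinearGroup.coe_GL_coe_matrix, ModularGroup.coe_T_zpow, Units.val_mul,
    coe_matS, mul_fin_two, transpose_mul_mul_fin_two, trace_fin_two, of_apply, cons_val',
    cons_val_zero, cons_val_one, empty_val', cons_val_fin_one] at shear swap_shear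
  have := shear 1; have := shear (-1); have := swap_shear 1; have := swap_shear (-1)
  constructor <;> cases abs_cases b <;> linarith

theorem exists_isReducedForm_of_posDef {F : Matrix (Fin 2) (Fin 2) ℤ} (hF : F.PosDef) :
    ∃ (g : GL (Fin 2) ℤ) (a b c : ℤ),
      IsReducedForm a b c ∧ (g : Matrix (Fin 2) (Fin 2) ℤ)ᵀ * F * g = !![a, b; b, c] := by
  have posDef_congr (g : GL (Fin 2) ℤ) : ((g : Matrix (Fin 2) (Fin 2) ℤ)ᵀ * F * g).PosDef := by
    rw [← conjTranspose_eq_transpose_of_trivial]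
    exact hF.conjTranspose_mul_mul_same (mulVec_injective_of_isUnit g.isUnit)
  obtain ⟨_, ⟨g, rfl⟩, hmin⟩ := Int.exists_least_of_bdd
    (P := fun z => ∃ g : GL (Fin 2) ℤ, ((g : Matrix (Fin 2) (Fin 2) ℤ)ᵀ * F * g).trace = z)
    ⟨0, by rintro _ ⟨g, rfl⟩; exact (posDef_congr g).trace_pos.le⟩ ⟨_, 1, rfl⟩
  obtain ⟨a, b, c, hg⟩ : ∃ a b c : ℤ, (g : Matrix (Fin 2) (Fin 2) ℤ)ᵀ * F * g = !![a, b; b, c] :=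
    ⟨_, _, _, by rw [eta_fin_two (_ * _), ← (posDef_congr g).isHermitian.apply 0 1, star_trivial]⟩
  have hpos := posDef_congr g
  rw [hg] at hpos
  have ha : 0 < a := by simpa using hpos.diag_pos (i := 0)
  have hc : 0 < c := by simpa using hpos.diag_pos (i := 1)
  obtain ⟨hba, hbc⟩ := two_mul_abs_le_of_trace_le fun h => by
    rw [← hg, transpose_mul_mul_mul_mul]
    exact hmin _ ⟨g * h, rfl⟩
  rcases le_total a c with hac | hca <;> rcases le_total 0 b with hb | hb
  · exact ⟨g, a, b, c, ⟨ha, hb, by linarith [le_abs_self b], hac⟩, hg⟩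
  · refine ⟨g * matR, a, -b, c, ⟨ha, by linarith, by linarith [neg_abs_le b], hac⟩, ?_⟩
    rw [Units.val_mul, ← transpose_mul_mul_mul_mul, hg, matR_transpose_mul_mul]
  · refine ⟨g * matS, c, b, a, ⟨hc, hb, by linarith [le_abs_self b], hca⟩, ?_⟩
    rw [Units.val_mul, ← transpose_mul_mul_mul_mul, hg, matS_transpose_mul_mul]
  · refine ⟨g * matS * matR, c, -b, a, ⟨hc, by linarith, by linarith [neg_abs_le b], hca⟩, ?_⟩
    rw [Units.val_mul, Units.val_mul, ← transpose_mul_mul_mul_mul, ← transpose_mul_mul_mul_mul, hg,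
      matS_transpose_mul_mul, matR_transpose_mul_mul]

lemma IsReducedForm.three_mul_sq_le {a b c : ℤ} (hF : IsReducedForm a b c) (x y : ℤ) :
    3 * a * x ^ 2 ≤ 4 * (a * x * x + 2 * b * x * y + c * y * y) ∧
      3 * c * y ^ 2 ≤ 4 * (a * x * x + 2 * b * x * y + c * y * y) := by
  obtain ⟨ha, hb, hba, hac⟩ := hF
  have hxy : -(|x| * |y|) ≤ x * y := by rw [← abs_mul]; exact neg_abs_le _
  have hbxy : -(a * (|x| * |y|)) ≤ 2 * b * (x * y) := by
    nlinarith [abs_nonneg x, abs_nonneg y, mul_nonneg (abs_nonneg x) (abs_nonneg y)]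
  constructor
  · nlinarith [mul_nonneg ha.le (sq_nonneg (|x| - 2 * |y|)), sq_abs x, sq_abs y,
      mul_nonneg (sub_nonneg.2 hac) (sq_nonneg y)]
  · nlinarith [mul_nonneg ha.le (sq_nonneg (2 * |x| - |y|)), sq_abs x, sq_abs y,
      mul_nonneg (sub_nonneg.2 hac) (sq_nonneg y)]

lemma IsReducedForm.exists_entries_mem_Icc_of_mem_formAut {a b c : ℤ} (hF : IsReducedForm a b c)
    {g : GL (Fin 2) ℤ} (hg : g ∈ formAut !![a, b; b, c]) :
    ∃ p q r s : ℤ, (g : Matrix (Fin 2) (Fin 2) ℤ) = !![p, q; r, s] ∧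
      p ∈ Set.Icc (-1) 1 ∧ q ∈ Set.Icc (-1) 1 ∧ r ∈ Set.Icc (-1) 1 ∧ s ∈ Set.Icc (-1) 1 ∧
      a * p * p + 2 * b * p * r + c * r * r = a ∧
      a * p * q + b * (p * s + q * r) + c * r * s = b ∧
      a * q * q + 2 * b * q * s + c * s * s = c := by
  obtain ⟨p, q, r, s, hpqrs⟩ : ∃ p q r s : ℤ, (g : Matrix (Fin 2) (Fin 2) ℤ) = !![p, q; r, s] :=
    ⟨_, _, _, _, eta_fin_two _⟩
  have hdet : p * s - q * r = 1 ∨ p * s - q * r = -1 := by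
    rw [← Int.isUnit_iff, ← det_fin_two_of, ← hpqrs]
    exact (isUnit_iff_isUnit_det _).mp g.isUnit
  rw [mem_formAut, hpqrs, transpose_mul_mul_fin_two] at hg
  have e₁ := congr_fun₂ hg 0 0
  have e₂ := congr_fun₂ hg 0 1
  have e₃ := congr_fun₂ hg 1 1
  simp only [of_apply, cons_val', cons_val_zero, cons_val_one, empty_val', cons_val_fin_one]
    at e₁ e₂ e₃
  have hp := (hF.three_mul_sq_le p r).1
  have hr := (hF.three_mul_sq_le p r).2
  have hs := (hF.three_mul_sq_le q s).2
  obtain ⟨ha, hb, hba, hac⟩ := hF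
  rw [e₁] at hp hr
  rw [e₃] at hs
  have hp : |p| ≤ 1 := abs_le_one_iff_mul_self_le_one.2 (by nlinarith)
  have hr : |r| ≤ 1 := abs_le_one_iff_mul_self_le_one.2 (by nlinarith)
  have hs : |s| ≤ 1 := abs_le_one_iff_mul_self_le_one.2 (by nlinarith)
  refine ⟨p, q, r, s, hpqrs, abs_le.1 hp, ?_, abs_le.1 hr, abs_le.1 hs, by linear_combination e₁,
    by linear_combination e₂, by linear_combination e₃⟩
  rw [abs_le] at hs
  rw [Set.mem_Icc]
  obtain rfl | rfl | rfl : s = -1 ∨ s = 0 ∨ s = 1 := by omega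
  · have : q * (a * q - 2 * b) = 0 := by linear_combination e₃
    rcases mul_eq_zero.1 this with h | h <;> constructor <;> nlinarith
  · have hq : q ∣ 1 := by rcases hdet with h | h; exacts [⟨-r, by linarith⟩, ⟨r, by linarith⟩]
    have := Int.isUnit_iff.mp (isUnit_of_dvd_one hq)
    omega
  · have : q * (a * q + 2 * b) = 0 := by linear_combination e₃
    rcases mul_eq_zero.1 this with h | h <;> constructor <;> nlinarith

lemma IsReducedForm.pow_six_eq_one {a b c : ℤ} (hF : IsReducedForm a b c) (hsq : ¬(b = 0 ∧ a = c))
    {g : GL (Fin 2) ℤ} (hg : g ∈ formAut !![a, b; b, c]) (hdet : GeneralLinearGroup.det g = 1) :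
    g ^ 6 = 1 := by
  obtain ⟨p, q, r, s, hpqrs, ⟨hp₁, hp₂⟩, ⟨hq₁, hq₂⟩, ⟨hr₁, hr₂⟩, ⟨hs₁, hs₂⟩, e₁, e₂, e₃⟩ :=
    hF.exists_entries_mem_Icc_of_mem_formAut hg
  have hdet : p * s - q * r = 1 := by
    simpa [← det_fin_two_of, ← hpqrs] using congrArg Units.val hdet
  rw [Units.ext_iff, Units.val_pow_eq_pow_val, hpqrs, Units.val_one]
  obtain ⟨ha, hb, hba, hac⟩ := hF
  interval_cases p <;> interval_cases q <;> interval_cases r <;> interval_cases s <;>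
    first | omega | decide

lemma IsReducedForm.exists_mem_formAut_transpose_mul_self {a b c : ℤ} (hF : IsReducedForm a b c)
    {g : GL (Fin 2) ℤ} (hg : g ∈ formAut !![a, b; b, c]) (hdet : GeneralLinearGroup.det g = -1) :
    ∃ v : GL (Fin 2) ℤ,
      g ∈ formAut ((v : Matrix (Fin 2) (Fin 2) ℤ)ᵀ * (v : Matrix (Fin 2) (Fin 2) ℤ)) := by
  have hT : (((ModularGroup.T : SL(2, ℤ)) : GL (Fin 2) ℤ) : Matrix (Fin 2) (Fin 2) ℤ) =
      !![1, 1; 0, 1] := by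
    rw [SpecialLinearGroup.coe_GL_coe_matrix, ModularGroup.coe_T]
  suffices g ∈ formAut 1 ∨ g ∈ formAut !![1, 1; 1, 2] ∨ g ∈ formAut !![2, 1; 1, 1] by
    rcases this with h | h | h
    · exact ⟨1, by simpa using h⟩
    · refine ⟨ModularGroup.T, ?_⟩
      rwa [hT, transpose_fin_two, mul_fin_two]
    · refine ⟨ModularGroup.T * matS, ?_⟩
      rwa [Units.val_mul, hT, coe_matS, mul_fin_two, transpose_fin_two, mul_fin_two]
  obtain ⟨p, q, r, s, hpqrs, ⟨hp₁, hp₂⟩, ⟨hq₁, hq₂⟩, ⟨hr₁, hr₂⟩, ⟨hs₁, hs₂⟩, e₁, e₂, e₃⟩ :=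
    hF.exists_entries_mem_Icc_of_mem_formAut hg
  have hdet : p * s - q * r = -1 := by
    simpa [← det_fin_two_of, ← hpqrs] using congrArg Units.val hdet
  simp only [mem_formAut, hpqrs]
  obtain ⟨ha, hb, hba, hac⟩ := hF
  interval_cases p <;> interval_cases q <;> interval_cases r <;> interval_cases s <;>
    first | omega | decide

theorem formAut_one : formAut (1 : Matrix (Fin 2) (Fin 2) ℤ) = G2 := by
  apply le_antisymm
  · intro g hg
    have hF : IsReducedForm 1 0 1 := by norm_num [IsReducedForm]
    rw [one_fin_two] at hg
    obtain ⟨p, q, r, s, hpqrs, ⟨hp₁, hp₂⟩, ⟨hq₁, hq₂⟩, ⟨hr₁, hr₂⟩, ⟨hs₁, hs₂⟩, e₁, e₂, e₃⟩ :=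
      hF.exists_entries_mem_Icc_of_mem_formAut hg
    rw [← range_dihedralToGL, MonoidHom.mem_range]
    simp only [Units.ext_iff, hpqrs]
    interval_cases p <;> interval_cases q <;> interval_cases r <;> interval_cases s <;>
      first | omega | decide
  · rw [G2, Subgroup.closure_le]
    rintro _ (rfl | rfl) <;> rw [SetLike.mem_coe, mem_formAut] <;> decide

lemma IsReducedForm.eq_one_or_eq_neg_one_of_isPGroup {a b c : ℤ} (hF : IsReducedForm a b c)
    (hsq : ¬(b = 0 ∧ a = c)) {K : Subgroup (GL (Fin 2) ℤ)} (hK2 : IsPGroup 2 K)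
    (hK : K ≤ formAut !![a, b; b, c]) {x : GL (Fin 2) ℤ} (hx : x ∈ K)
    (hdet : GeneralLinearGroup.det x = 1) : x = 1 ∨ x = -1 := by
  obtain ⟨k, hk⟩ := hK2 ⟨x, hx⟩
  refine eq_one_or_eq_neg_one_of_det_eq_one_of_sq_eq_one hdet
    (sq_eq_one_of_pow_six_eq_one (hF.pow_six_eq_one hsq (hK hx) hdet) (k := k) ?_)
  simpa using congrArg Subtype.val hk

theorem IsReducedForm.exists_le_formAut_transpose_mul_self {a b c : ℤ} (hF : IsReducedForm a b c)
    {K : Subgroup (GL (Fin 2) ℤ)} (hK2 : IsPGroup 2 K) (hK : K ≤ formAut !![a, b; b, c]) :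
    ∃ v : GL (Fin 2) ℤ,
      K ≤ formAut ((v : Matrix (Fin 2) (Fin 2) ℤ)ᵀ * (v : Matrix (Fin 2) (Fin 2) ℤ)) := by
  by_cases hsq : b = 0 ∧ a = c
  · obtain ⟨rfl, rfl⟩ := hsq
    have : !![a, 0; 0, a] = a • (1 : Matrix (Fin 2) (Fin 2) ℤ) := by
      rw [one_fin_two, smul_of]; simp
    rw [this, formAut_smul hF.1.ne'] at hK
    exact ⟨1, by simpa using hK⟩
  -- two elements of determinant `-1` in `K` differ by `±1`
  obtain ⟨v, hv⟩ : ∃ v : GL (Fin 2) ℤ, ∀ x ∈ K, GeneralLinearGroup.det x = -1 →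
      x ∈ formAut ((v : Matrix (Fin 2) (Fin 2) ℤ)ᵀ * (v : Matrix (Fin 2) (Fin 2) ℤ)) := by
    by_cases h : ∃ x₀ ∈ K, GeneralLinearGroup.det x₀ = -1
    · obtain ⟨x₀, hx₀, hdet₀⟩ := h
      obtain ⟨v, hv⟩ := hF.exists_mem_formAut_transpose_mul_self (hK hx₀) hdet₀
      refine ⟨v, fun x hx hdet => ?_⟩
      rcases hF.eq_one_or_eq_neg_one_of_isPGroup hsq hK2 hK (mul_mem hx (inv_mem hx₀))
          (by simp [hdet, hdet₀]) with h | h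
      · rwa [mul_inv_eq_one.1 h]
      · rw [mul_inv_eq_iff_eq_mul.1 h, neg_one_mul]
        exact neg_mem_formAut hv
    · exact ⟨1, fun x hx hdet => (h ⟨x, hx, hdet⟩).elim⟩
  refine ⟨v, fun x hx => ?_⟩
  rcases Int.units_eq_one_or (GeneralLinearGroup.det x) with hdet | hdet
  · rcases hF.eq_one_or_eq_neg_one_of_isPGroup hsq hK2 hK hx hdet with rfl | rfl
    · exact one_mem _
    · exact neg_mem_formAut (one_mem _)
  · exact hv x hx hdet

theorem exists_map_conj_le_G2 (H : Subgroup (GL (Fin 2) ℤ)) [Finite H] (hH : IsPGroup 2 H) :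
    ∃ g : GL (Fin 2) ℤ, H.map (MulAut.conj g).toMonoidHom ≤ G2 := by
  obtain ⟨F, hF, hHF⟩ := exists_posDef_le_formAut H
  obtain ⟨g, a, b, c, hred, hg⟩ := exists_isReducedForm_of_posDef hF
  have hK : H.map (MulAut.conj g⁻¹).toMonoidHom ≤ formAut !![a, b; b, c] := by
    rintro _ ⟨h, hh, rfl⟩
    rw [← hg, ← conj_mem_formAut_iff]
    simpa [mul_assoc] using hHF hh
  obtain ⟨v, hv⟩ := hred.exists_le_formAut_transpose_mul_self (hH.map _) hK
  refine ⟨v * g⁻¹, ?_⟩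
  rintro _ ⟨h, hh, rfl⟩
  have := hv ⟨h, hh, rfl⟩
  rw [← Matrix.mul_one (v : Matrix (Fin 2) (Fin 2) ℤ)ᵀ, ← conj_mem_formAut_iff, formAut_one] at this
  simpa [mul_assoc] using this

/-- `𝒢₂` is dihedral of order `8`, and every finite `2`-subgroup of
`GL₂(ℤ)` is conjugate in `GL₂(ℤ)` to a subgroup of `𝒢₂`. -/
theorem stmt7 :
    Nonempty (G2 ≃* DihedralGroup 4) ∧
    ∀ H : Subgroup (GL (Fin 2) ℤ), Finite H → IsPGroup 2 H →
      ∃ g : GL (Fin 2) ℤ, Subgroup.map (MulAut.conj g).toMonoidHom H ≤ G2 :=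
  ⟨nonempty_G2_mulEquiv_dihedralGroup, fun H _ hH => exists_map_conj_le_G2 H hH⟩
end

section
/- Every nontrivial finite 3-subgroup of GL₂(ℤ) (a finite subgroup whose order is a power of 3) is conjugate in GL₂(ℤ) to the subgroup 𝒢₉ generated by the matrix [[0,−1],[1,−1]], which is cyclic of order 3. -/
open Matrix

/-- The element `[[0,-1],[1,-1]]` of `GL₂(ℤ)`. -/
def matC : GL (Fin 2) ℤ := ⟨!![0, -1; 1, -1], !![-1, 1; -1, 0], by decide, by decide⟩

/-- The subgroup `𝒢₉ = ⟨[[0,-1],[1,-1]]⟩` of `GL₂(ℤ)`. -/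
def G9 : Subgroup (GL (Fin 2) ℤ) := Subgroup.closure {matC}

def Cmat : Matrix (Fin 2) (Fin 2) ℤ := !![0, -1; 1, -1]


lemma quadAux : ∀ (n : ℕ) (a b c : ℤ), a.toNat ≤ n → 0 < a → b^2 - 4*a*c = -3 →
    ∃ x y : ℤ, a*x^2 + b*x*y + c*y^2 = 1 := by
  intro n
  induction n with
  | zero => intro a b c h ha _; omega
  | succ n ih =>
    intro a b c hn ha hd
    rcases eq_or_lt_of_le (by linarith : (1:ℤ) ≤ a) with h1 | h2
    · exact ⟨1, 0, by rw [← h1]; ring⟩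
    · have h2a : (0:ℤ) < 2*a := by linarith
      have hsq : ∃ m : ℤ, (b + 2*a*m)^2 ≤ a^2 := by
        have hdm := Int.mul_ediv_add_emod b (2*a)
        have hr0 : 0 ≤ b % (2*a) := Int.emod_nonneg b (by linarith)
        have hrlt : b % (2*a) < 2*a := Int.emod_lt_of_pos b h2a
        rcases le_or_gt (b % (2*a)) a with hc | hc
        · exact ⟨-(b / (2*a)), by nlinarith⟩
        · exact ⟨-(b / (2*a)) - 1, by nlinarith⟩
      obtain ⟨m, hm⟩ := hsq
      have hdisc : (b + 2*a*m)^2 - 4*(a*m^2 + b*m + c)*a = -3 := by linear_combination hd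
      have hc' : 0 < a*m^2 + b*m + c := by nlinarith [sq_nonneg (b + 2*a*m)]
      have hlt : a*m^2 + b*m + c < a := by nlinarith
      have htn : (a*m^2 + b*m + c).toNat ≤ n := by omega
      obtain ⟨x, y, hxy⟩ := ih (a*m^2 + b*m + c) (b + 2*a*m) a htn hc' (by linear_combination hdisc)
      exact ⟨y + m*x, x, by linear_combination hxy⟩

lemma quad (a b c : ℤ) (ha : 0 < a) (hd : b^2 - 4*a*c = -3) :
    ∃ x y : ℤ, a*x^2 + b*x*y + c*y^2 = 1 := quadAux a.toNat a b c le_rfl ha hd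






lemma cube_lemma (A : Matrix (Fin 2) (Fin 2) ℤ) (h3 : A^3 = 1) (h1 : A ≠ 1) :
    A^2 + A + 1 = 0 := by
  set a := A 0 0 with ha0
  set b := A 0 1 with hb0
  set c := A 1 0 with hc0
  set d := A 1 1 with hd0
  have hA : A = !![a,b;c,d] := eta_fin_two A
  rw [hA] at h3 h1 ⊢
  rw [pow_succ, pow_succ, pow_one, Matrix.mul_fin_two, Matrix.mul_fin_two,
    Matrix.one_fin_two] at h3
  have e00 := congrFun (congrFun h3 0) 0
  have e01 := congrFun (congrFun h3 0) 1
  have e10 := congrFun (congrFun h3 1) 0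
  have e11 := congrFun (congrFun h3 1) 1
  simp at e00 e01 e10 e11
  have E1 : a^3 + 2*a*b*c + b*c*d = 1 := by linear_combination e00
  have E2 : b*(a^2 + a*d + d^2 + b*c) = 0 := by linear_combination e01
  have E3 : c*(a^2 + a*d + d^2 + b*c) = 0 := by linear_combination e10
  have E4 : d^3 + 2*b*c*d + a*b*c = 1 := by linear_combination e11
  rcases eq_or_ne (a^2 + a*d + d^2 + b*c) 0 with hs | hs
  · have hte : (a+d)*(a*d - b*c) = -1 := by linear_combination a*hs - E1
    have ht3 : (a+d)^3 = -1 := by linear_combination (a+d)*hs + hte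
    have ht : a + d = -1 := by nlinarith [sq_nonneg (a+d+1), sq_nonneg (a+d-1)]
    have he : a*d - b*c = 1 := by linear_combination (a+d-1)*ht - hs
    rw [pow_two, Matrix.mul_fin_two, Matrix.one_fin_two]
    ext i j
    fin_cases i <;> fin_cases j <;> simp [Matrix.add_apply]
    · linear_combination a*ht - he
    · linear_combination b*ht
    · linear_combination c*ht
    · linear_combination d*ht - he
  · have hb : b = 0 := by rcases mul_eq_zero.mp E2 with h | h; exact h; exact absurd h hs
    have hc : c = 0 := by rcases mul_eq_zero.mp E3 with h | h; exact h; exact absurd h hs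
    have ha1 : (a-1)*(a^2+a+1) = 0 := by linear_combination E1 + (-2*a*c - c*d)*hb
    have hd1 : (d-1)*(d^2+d+1) = 0 := by linear_combination E4 + (-2*c*d - a*c)*hb
    have ha' : a = 1 := by
      rcases mul_eq_zero.mp ha1 with h | h
      · linarith
      · nlinarith [sq_nonneg (2*a+1)]
    have hd' : d = 1 := by
      rcases mul_eq_zero.mp hd1 with h | h
      · linarith
      · nlinarith [sq_nonneg (2*d+1)]
    exact absurd (by rw [ha', hb, hc, hd', Matrix.one_fin_two]) h1








lemma conj_lemma (A : Matrix (Fin 2) (Fin 2) ℤ) (hA : A^2 + A + 1 = 0) :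
    ∃ P : Matrix (Fin 2) (Fin 2) ℤ, IsUnit P.det ∧ A * P = P * Cmat := by
  set a := A 0 0 with ha0
  set b := A 0 1 with hb0
  set c := A 1 0 with hc0
  set d := A 1 1 with hd0
  have hAe : A = !![a,b;c,d] := eta_fin_two A
  rw [hAe] at hA
  rw [pow_two, Matrix.mul_fin_two] at hA
  have e00 := congrFun (congrFun hA 0) 0
  have e01 := congrFun (congrFun hA 0) 1
  have e10 := congrFun (congrFun hA 1) 0
  have e11 := congrFun (congrFun hA 1) 1
  simp [Matrix.add_apply] at e00 e01 e10 e11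
  have ht : a + d + 1 = 0 := by
    by_contra h
    have hb : b = 0 := by
      rcases mul_eq_zero.mp (show b*(a+d+1) = 0 by linear_combination e01) with h' | h'
      · exact h'
      · exact absurd h' h
    have hc : c = 0 := by
      rcases mul_eq_zero.mp (show c*(a+d+1) = 0 by linear_combination e10) with h' | h'
      · exact h'
      · exact absurd h' h
    have : a^2 + a + 1 = 0 := by linear_combination e00 - c*hb
    nlinarith [sq_nonneg (2*a+1)]
  have hbc : b*c = -a^2 - a - 1 := by linear_combination e00
  have hcne : c ≠ 0 := by
    intro h
    rw [h] at hbc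
    nlinarith [sq_nonneg (2*a+1)]
  have key : ∀ x y : ℤ, A * !![x, a*x+b*y; y, c*x+d*y] = !![x, a*x+b*y; y, c*x+d*y] * Cmat := by
    intro x y
    rw [hAe, Cmat, Matrix.mul_fin_two, Matrix.mul_fin_two]
    ext i j
    fin_cases i <;> fin_cases j <;> simp
    · linear_combination x*e00 + y*e01
    · linear_combination x*e10 + y*e11
  rcases lt_or_gt_of_ne hcne with hneg | hpos
  · obtain ⟨x, y, hxy⟩ := quad (-c) (a-d) b (by linarith)
      (by linear_combination 4*hbc - (3*a - d + 1)*ht)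
    refine ⟨!![x, a*x+b*y; y, c*x+d*y], ?_, key x y⟩
    rw [Matrix.det_fin_two_of, Int.isUnit_iff]
    right; linear_combination -hxy
  · obtain ⟨x, y, hxy⟩ := quad c (d-a) (-b) (by linarith)
      (by linear_combination 4*hbc - (3*a - d + 1)*ht)
    refine ⟨!![x, a*x+b*y; y, c*x+d*y], ?_, key x y⟩
    rw [Matrix.det_fin_two_of, Int.isUnit_iff]
    left; linear_combination hxy






lemma central (X : Matrix (Fin 2) (Fin 2) ℤ) (hc : X * Cmat = Cmat * X) (hd : IsUnit X.det) :
    X = 1 ∨ X = Cmat ∨ X = Cmat^2 ∨ X = -1 ∨ X = -Cmat ∨ X = -Cmat^2 := by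
  set p := X 0 0 with hp0
  set q := X 0 1 with hq0
  set r := X 1 0 with hr0
  set s := X 1 1 with hs0
  have hXe : X = !![p,q;r,s] := eta_fin_two X
  rw [hXe] at hc hd ⊢
  rw [Cmat, Matrix.mul_fin_two, Matrix.mul_fin_two] at hc
  have e00 := congrFun (congrFun hc 0) 0
  have e01 := congrFun (congrFun hc 0) 1
  simp at e00 e01
  have hr : r = -q := by linear_combination e00
  have hs : s = p + q := by linear_combination e01
  rw [Matrix.det_fin_two_of, Int.isUnit_iff] at hd
  have h1 : p^2 + p*q + q^2 = 1 := by
    rcases hd with h | h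
    · linear_combination h - p*hs + q*hr
    · exfalso
      have h1' : p^2 + p*q + q^2 = -1 := by linear_combination h - p*hs + q*hr
      nlinarith [sq_nonneg (2*p+q), sq_nonneg q]
  have hq2 : q = -1 ∨ q = 0 ∨ q = 1 := by
    have h3 : q^2 ≤ 1 := by nlinarith [sq_nonneg (2*p+q)]
    have h4 : -1 ≤ q := by nlinarith
    have h5 : q ≤ 1 := by nlinarith
    omega
  have hCsq : Cmat^2 = !![-1,1;-1,0] := by rw [pow_two, Cmat, Matrix.mul_fin_two]; norm_num
  rcases hq2 with hq | hq | hq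
  · have hpp : p*(p-1) = 0 := by linear_combination h1 + (-p - q + 1)*hq
    rcases mul_eq_zero.mp hpp with h | h
    · right; left
      rw [hr, hs, h, hq, Cmat]; norm_num
    · right; right; right; right; right
      have hp1 : p = 1 := by linarith
      rw [hr, hs, hp1, hq, hCsq]
      decide
  · have hpp : (p-1)*(p+1) = 0 := by linear_combination h1 + (-p - q)*hq
    rcases mul_eq_zero.mp hpp with h | h
    · left
      have hp1 : p = 1 := by linarith
      rw [hr, hs, hp1, hq, Matrix.one_fin_two]; norm_num
    · right; right; right; left
      have hp1 : p = -1 := by linarith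
      rw [hr, hs, hp1, hq, Matrix.one_fin_two]
      decide
  · have hpp : p*(p+1) = 0 := by linear_combination h1 + (-p - q - 1)*hq
    rcases mul_eq_zero.mp hpp with h | h
    · right; right; right; right; left
      rw [hr, hs, h, hq, Cmat]
      decide
    · right; right; left
      have hp1 : p = -1 := by linarith
      rw [hr, hs, hp1, hq, hCsq]; norm_num


lemma matC_val : (matC : Matrix (Fin 2) (Fin 2) ℤ) = Cmat := rfl

lemma matC_pow3 : matC ^ 3 = 1 := by
  apply Units.ext
  rw [Units.val_pow_eq_pow_val]
  show Cmat ^ 3 = 1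
  decide

lemma matC_ne_one : matC ≠ 1 := by
  intro h
  have := congrArg Units.val h
  rw [matC_val, Units.val_one] at this
  exact absurd this (by decide)

/-- `𝒢₉` is cyclic of order `3`, and every nontrivial finite `3`-subgroup
of `GL₂(ℤ)` is conjugate in `GL₂(ℤ)` to `𝒢₉`. -/
theorem stmt8 :
    Nonempty (G9 ≃* Multiplicative (ZMod 3)) ∧
    ∀ H : Subgroup (GL (Fin 2) ℤ), Finite H → IsPGroup 3 H → H ≠ ⊥ →
      ∃ g : GL (Fin 2) ℤ, Subgroup.map (MulAut.conj g).toMonoidHom H = G9 := by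
  haveI : Fact (Nat.Prime 3) := ⟨by norm_num⟩
  have hord : orderOf matC = 3 := orderOf_eq_prime matC_pow3 matC_ne_one
  have hG9card : Nat.card G9 = 3 := by
    rw [G9, ← Subgroup.zpowers_eq_closure, Nat.card_zpowers, hord]
  constructor
  · have hZcard : Nat.card (Multiplicative (ZMod 3)) = 3 := by
      simp [Nat.card_eq_fintype_card]
    exact ⟨mulEquivOfPrimeCardEq hG9card hZcard⟩
  · intro H hfin hp hne
    haveI : Finite H := hfin
    haveI : Nontrivial H := (Subgroup.nontrivial_iff_ne_bot H).mpr hne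
    haveI := hp.center_nontrivial
    obtain ⟨z, hz1⟩ := exists_ne (1 : Subgroup.center H)
    have hw : (z : H) ∈ Subgroup.center H := z.2
    have hwne : (z : H) ≠ 1 := by
      intro h; exact hz1 (Subtype.ext h)
    obtain ⟨k, hk⟩ := hp z
    have hdvd := orderOf_dvd_of_pow_eq_one hk
    obtain ⟨j, hjle, hj⟩ := (Nat.dvd_prime_pow Nat.prime_three).mp hdvd
    have hj0 : j ≠ 0 := by
      intro h
      rw [h, pow_zero, orderOf_eq_one_iff] at hj
      exact hwne hj
    set g : H := (z : H) ^ (3 ^ (j-1)) with hgdef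
    have hg3 : g ^ 3 = 1 := by
      rw [hgdef, ← pow_mul, ← pow_succ]
      have : j - 1 + 1 = j := by omega
      rw [this, ← hj]
      exact pow_orderOf_eq_one _
    have hgne : g ≠ 1 := by
      intro h
      have := orderOf_dvd_of_pow_eq_one h
      rw [hj] at this
      have h1 := Nat.le_of_dvd (by positivity) this
      have h2 : (3:ℕ) ^ (j-1) < 3 ^ j := Nat.pow_lt_pow_right (by norm_num) (by omega)
      omega
    have hgc : ∀ h : H, h * g = g * h := by
      intro h
      have hcomm : Commute h (z : H) := Subgroup.mem_center_iff.mp hw h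
      exact hcomm.pow_right (3 ^ (j-1))
    -- pass to GL
    set gg : GL (Fin 2) ℤ := (g : GL (Fin 2) ℤ) with hggdef
    have hgg3 : gg ^ 3 = 1 := by
      have := congrArg (Subtype.val : H → GL (Fin 2) ℤ) hg3
      push_cast at this
      exact this
    have hggne : gg ≠ 1 := by
      intro h
      exact hgne (Subtype.ext h)
    -- pass to matrices
    have hM3 : (gg : Matrix (Fin 2) (Fin 2) ℤ) ^ 3 = 1 := by
      rw [← Units.val_pow_eq_pow_val, hgg3, Units.val_one]
    have hMne : (gg : Matrix (Fin 2) (Fin 2) ℤ) ≠ 1 := by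
      intro h
      exact hggne (Units.ext h)
    obtain ⟨P, hPu, hPC⟩ := conj_lemma _ (cube_lemma _ hM3 hMne)
    set Pu : GL (Fin 2) ℤ := Matrix.nonsingInvUnit P hPu with hPudef
    have hPuval : (Pu : Matrix (Fin 2) (Fin 2) ℤ) = P := rfl
    have hPuinv : ((Pu⁻¹ : GL (Fin 2) ℤ) : Matrix (Fin 2) (Fin 2) ℤ) = P⁻¹ := rfl
    refine ⟨Pu⁻¹, ?_⟩
    have hconj_gg : (MulAut.conj Pu⁻¹) gg = matC := by
      apply Units.ext
      rw [matC_val]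
      show ((Pu⁻¹ * gg * Pu : GL (Fin 2) ℤ) : Matrix (Fin 2) (Fin 2) ℤ) = Cmat
      rw [Units.val_mul, Units.val_mul, hPuinv, hPuval]
      rw [Matrix.mul_assoc, hPC, ← Matrix.mul_assoc, Matrix.nonsing_inv_mul P hPu,
        Matrix.one_mul]
    have hone_ne : (1 : GL (Fin 2) ℤ) ≠ -1 := by
      intro h
      have := congrArg Units.val h
      rw [Units.val_one, Units.val_neg, Units.val_one] at this
      exact absurd this (by decide)
    apply le_antisymm
    · intro x hx
      obtain ⟨h, hH, rfl⟩ := Subgroup.mem_map.mp hx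
      simp only [MulEquiv.coe_toMonoidHom]
      have hcommGL : h * gg = gg * h := congrArg Subtype.val (hgc ⟨h, hH⟩)
      have hcomm2 : (MulAut.conj Pu⁻¹) h * matC = matC * (MulAut.conj Pu⁻¹) h := by
        have := congrArg (MulAut.conj Pu⁻¹) hcommGL
        rw [_root_.map_mul, _root_.map_mul, hconj_gg] at this
        exact this
      have hcomm3 : ((MulAut.conj Pu⁻¹) h : Matrix (Fin 2) (Fin 2) ℤ) * Cmat
          = Cmat * ((MulAut.conj Pu⁻¹) h : Matrix (Fin 2) (Fin 2) ℤ) := by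
        have := congrArg Units.val hcomm2
        rwa [Units.val_mul, Units.val_mul, matC_val] at this
      have hdet : IsUnit ((MulAut.conj Pu⁻¹) h : Matrix (Fin 2) (Fin 2) ℤ).det :=
        (Matrix.isUnit_iff_isUnit_det _).mp ((MulAut.conj Pu⁻¹) h).isUnit
      have hmemC : matC ∈ G9 := Subgroup.subset_closure (Set.mem_singleton _)
      -- order: (conj h)^(3^k') = 1
      obtain ⟨k', hk'⟩ := hp ⟨h, hH⟩
      have hk'GL : ((MulAut.conj Pu⁻¹) h) ^ (3 ^ k') = 1 := by
        have h1 : h ^ (3 ^ k') = 1 := by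
          have := congrArg (Subtype.val : H → GL (Fin 2) ℤ) hk'
          push_cast at this
          exact this
        rw [← _root_.map_pow, h1, _root_.map_one]
      have neg_case : ∀ hcube : ((MulAut.conj Pu⁻¹) h) ^ 3 = -1, False := by
        intro hcube
        rcases Nat.eq_zero_or_pos k' with hk0 | hk0
        · rw [hk0, pow_zero, pow_one] at hk'GL
          rw [hk'GL, one_pow] at hcube
          exact hone_ne hcube
        · have : ((MulAut.conj Pu⁻¹) h) ^ (3 ^ k') = -1 := by
            have h3k : 3 ^ k' = 3 * 3 ^ (k' - 1) := by
              rw [← pow_succ']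
              congr 1
              omega
            rw [h3k, pow_mul, hcube]
            exact Odd.neg_one_pow (Odd.pow (by decide))
          rw [hk'GL] at this
          exact hone_ne this
      rcases central _ hcomm3 hdet with hX | hX | hX | hX | hX | hX
      · have : (MulAut.conj Pu⁻¹) h = 1 := Units.ext hX
        rw [this]; exact G9.one_mem
      · have : (MulAut.conj Pu⁻¹) h = matC := Units.ext (by rw [hX, matC_val])
        rw [this]; exact hmemC
      · have : (MulAut.conj Pu⁻¹) h = matC ^ 2 := Units.ext (by
          rw [hX, Units.val_pow_eq_pow_val, matC_val])
        rw [this]; exact pow_mem hmemC 2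
      · exact absurd (show ((MulAut.conj Pu⁻¹) h) ^ 3 = -1 from Units.ext (by
          rw [Units.val_pow_eq_pow_val, hX, Units.val_neg, Units.val_one]; decide))
          (fun hc => neg_case hc)
      · exact absurd (show ((MulAut.conj Pu⁻¹) h) ^ 3 = -1 from Units.ext (by
          rw [Units.val_pow_eq_pow_val, hX, Units.val_neg, Units.val_one]; decide))
          (fun hc => neg_case hc)
      · exact absurd (show ((MulAut.conj Pu⁻¹) h) ^ 3 = -1 from Units.ext (by
          rw [Units.val_pow_eq_pow_val, hX, Units.val_neg, Units.val_one]; decide))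
          (fun hc => neg_case hc)
    · rw [G9]
      apply (Subgroup.closure_le _).mpr
      intro x hx
      rw [Set.mem_singleton_iff] at hx
      subst hx
      exact Subgroup.mem_map.mpr ⟨gg, g.2, hconj_gg⟩
end

section
/- Let H be a finite subgroup of GL₂(ℂ) whose image in PGL₂(ℂ) under the quotient by the scalar matrices is isomorphic to the alternating group A₄. Then H contains the scalar matrix −I; in particular, the centre of H contains an element of order 2. -/
open Matrix

set_option linter.unreachableTactic false
set_option linter.unusedTactic false
set_option linter.unnecessarySeqFocus false


noncomputable def E1 : GL (Fin 2) ℂ :=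
  ⟨!![1,1;0,1], !![1,-1;0,1],
    by rw [Matrix.mul_fin_two, Matrix.one_fin_two]; norm_num,
    by rw [Matrix.mul_fin_two, Matrix.one_fin_two]; norm_num⟩

noncomputable def E2 : GL (Fin 2) ℂ :=
  ⟨!![1,0;1,1], !![1,0;-1,1],
    by rw [Matrix.mul_fin_two, Matrix.one_fin_two]; norm_num,
    by rw [Matrix.mul_fin_two, Matrix.one_fin_two]; norm_num⟩

lemma mem_center_iff_scalar (u : GL (Fin 2) ℂ) :
    u ∈ Subgroup.center (GL (Fin 2) ℂ) ↔
      ∃ c : ℂ, (u : Matrix (Fin 2) (Fin 2) ℂ) = c • 1 := by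
  constructor
  · intro hu
    have h1 := congrArg Units.val ((Subgroup.mem_center_iff.mp hu) E1)
    have h2 := congrArg Units.val ((Subgroup.mem_center_iff.mp hu) E2)
    rw [Units.val_mul, Units.val_mul] at h1 h2
    set A := (u : Matrix (Fin 2) (Fin 2) ℂ) with hA
    have e1 := congrFun (congrFun h1 0) 0
    have e2 := congrFun (congrFun h1 0) 1
    have e3 := congrFun (congrFun h2 0) 0
    simp [E1, E2, Matrix.mul_apply, Fin.sum_univ_two] at e1 e2 e3
    refine ⟨A 0 0, ?_⟩
    ext i j
    fin_cases i <;> fin_cases j <;> simp [Matrix.one_apply] <;>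
      first | rfl | linear_combination e1 | linear_combination e3 | linear_combination e2
  · rintro ⟨c, hc⟩
    rw [Subgroup.mem_center_iff]
    intro g
    apply Units.ext
    rw [Units.val_mul, Units.val_mul, hc]
    simp [mul_smul_comm, smul_mul_assoc]


lemma trace_zero (A : Matrix (Fin 2) (Fin 2) ℂ) (α : ℂ) (hA : A * A = α • 1)
    (hs : ¬ ∃ c : ℂ, A = c • 1) : A 1 1 = - A 0 0 := by
  have e00 := congrFun (congrFun hA 0) 0
  have e01 := congrFun (congrFun hA 0) 1
  have e10 := congrFun (congrFun hA 1) 0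
  have e11 := congrFun (congrFun hA 1) 1
  simp [Matrix.mul_apply, Fin.sum_univ_two, Matrix.one_apply] at e00 e01 e10 e11
  by_contra hne
  have htr : A 0 0 + A 1 1 ≠ 0 := fun h => hne (by linear_combination h)
  have hb : A 0 1 = 0 := by
    have h : A 0 1 * (A 0 0 + A 1 1) = 0 := by linear_combination e01
    rcases mul_eq_zero.mp h with h | h
    · exact h
    · exact absurd h htr
  have hc : A 1 0 = 0 := by
    have h : A 1 0 * (A 0 0 + A 1 1) = 0 := by linear_combination e10
    rcases mul_eq_zero.mp h with h | h
    · exact h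
    · exact absurd h htr
  have had : A 1 1 = A 0 0 := by
    have h : (A 1 1 - A 0 0) * (A 0 0 + A 1 1) = 0 := by linear_combination e11 - e00
    rcases mul_eq_zero.mp h with h | h
    · linear_combination h
    · exact absurd h htr
  exact hs ⟨A 0 0, by ext i j; fin_cases i <;> fin_cases j <;>
    simp [Matrix.one_apply] <;> first | rfl | linear_combination hb | linear_combination hc | linear_combination had⟩

lemma prop_of_comm (A B : Matrix (Fin 2) (Fin 2) ℂ)
    (hA2 : A 1 1 = -A 0 0) (hB2 : B 1 1 = -B 0 0)
    (hcomm : A * B = B * A) (hA0 : A ≠ 0) : ∃ μ : ℂ, B = μ • A := by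
  have c00 := congrFun (congrFun hcomm 0) 0
  have c01 := congrFun (congrFun hcomm 0) 1
  have c10 := congrFun (congrFun hcomm 1) 0
  simp [Matrix.mul_apply, Fin.sum_univ_two] at c00 c01 c10
  have h1 : A 0 1 * B 1 0 = B 0 1 * A 1 0 := by linear_combination c00
  have h2 : A 0 0 * B 0 1 = A 0 1 * B 0 0 := by
    linear_combination (c01 - (A 0 1 * hB2) + (B 0 1 * hA2)) / 2
  have h3 : A 1 0 * B 0 0 = A 0 0 * B 1 0 := by
    linear_combination (c10 + (A 1 0 * hB2) - (B 1 0 * hA2)) / 2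
  by_cases hp : A 0 0 ≠ 0
  · refine ⟨B 0 0 / A 0 0, ?_⟩
    ext i j
    fin_cases i <;> fin_cases j <;> simp [hB2, hA2] <;> field_simp <;>
      first | linear_combination h2 | linear_combination -h2 |
        linear_combination h3 | linear_combination -h3 | ring1
  · push_neg at hp
    by_cases hq : A 0 1 ≠ 0
    · have hx : B 0 0 = 0 := by
        rcases mul_eq_zero.mp (show A 0 1 * B 0 0 = 0 by rw [← h2, hp]; ring) with h | h
        · exact absurd h hq
        · exact h
      refine ⟨B 0 1 / A 0 1, ?_⟩
      ext i j
      fin_cases i <;> fin_cases j <;> simp [hB2, hA2, hp, hx] <;> field_simp <;>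
        first | linear_combination h1 | linear_combination -h1 | ring1
    · push_neg at hq
      have hr : A 1 0 ≠ 0 := by
        intro hr
        apply hA0
        ext i j
        fin_cases i <;> fin_cases j <;> simp [hA2, hp, hq, hr]
      have hx : B 0 0 = 0 := by
        rcases mul_eq_zero.mp (show A 1 0 * B 0 0 = 0 by rw [h3, hp]; ring) with h | h
        · exact absurd h hr
        · exact h
      have hy : B 0 1 = 0 := by
        rcases mul_eq_zero.mp (show B 0 1 * A 1 0 = 0 by rw [← h1, hq]; ring) with h | h
        · exact h
        · exact absurd h hr
      refine ⟨B 1 0 / A 1 0, ?_⟩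
      ext i j
      fin_cases i <;> fin_cases j <;> simp [hB2, hA2, hp, hq, hx, hy] <;> field_simp

/-- A finite subgroup `H` of `GL₂(ℂ)` whose image in `PGL₂(ℂ)` (the
quotient by the centre, i.e. the scalar matrices) is isomorphic to `A₄` contains the
scalar matrix `-I`; in particular the centre of `H` contains an element of order `2`. -/
theorem stmt12 (H : Subgroup (GL (Fin 2) ℂ)) [Finite H]
    (h : Nonempty
      ((H.map (QuotientGroup.mk' (Subgroup.center (GL (Fin 2) ℂ)))) ≃*
        alternatingGroup (Fin 4))) :
    (-1 : GL (Fin 2) ℂ) ∈ H ∧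
      ∃ z : Subgroup.center H, orderOf (z : H) = 2 := by
  obtain ⟨e⟩ := h
  set N := Subgroup.center (GL (Fin 2) ℂ) with hN
  set Q := QuotientGroup.mk' N with hQ
  -- the two commuting involutions in A4
  set σ : alternatingGroup (Fin 4) :=
    ⟨Equiv.swap 0 1 * Equiv.swap 2 3, by rw [Equiv.Perm.mem_alternatingGroup]; decide⟩ with hσ
  set τ : alternatingGroup (Fin 4) :=
    ⟨Equiv.swap 0 2 * Equiv.swap 1 3, by rw [Equiv.Perm.mem_alternatingGroup]; decide⟩ with hτ
  set a := e.symm σ with ha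
  set b := e.symm τ with hb
  have haa : a * a = 1 := by
    rw [ha, ← _root_.map_mul, ← map_one e.symm]
    congr 1
    apply Subtype.ext; decide
  have hab : a * b = b * a := by
    rw [ha, hb, ← _root_.map_mul, ← _root_.map_mul]
    congr 1
    apply Subtype.ext; decide
  have hane : a ≠ 1 := by
    intro hc
    rw [ha] at hc
    have := e.symm.injective (hc.trans (map_one e.symm).symm)
    exact absurd (congrArg Subtype.val this) (by decide)
  have habne : a ≠ b := by
    intro hc
    have := e.symm.injective hc
    exact absurd (congrArg Subtype.val this) (by decide)
  obtain ⟨g₁, hg₁H, hg₁⟩ := Subgroup.mem_map.mp a.2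
  obtain ⟨g₂, hg₂H, hg₂⟩ := Subgroup.mem_map.mp b.2
  -- basic properties
  have hQ1 : ∀ u : GL (Fin 2) ℂ, Q u = 1 ↔ u ∈ N := fun u => by
    show ((u : GL (Fin 2) ℂ ⧸ N) = 1) ↔ u ∈ N
    exact QuotientGroup.eq_one_iff u
  -- g₁² is central
  have hsq : g₁ * g₁ ∈ N := by
    rw [← hQ1, _root_.map_mul, hg₁]
    have := congrArg Subtype.val haa
    push_cast at this
    exact this
  -- g₁ not central
  have hg₁N : g₁ ∉ N := by
    intro hc
    rw [← hQ1] at hc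
    rw [hg₁] at hc
    exact hane (Subtype.ext hc)
  have hg₂N : g₂ ∉ N := by
    intro hc
    rw [← hQ1] at hc
    rw [hg₂] at hc
    have hbne : b ≠ 1 := by
      intro hc'
      rw [hb] at hc'
      have := e.symm.injective (hc'.trans (map_one e.symm).symm)
      exact absurd (congrArg Subtype.val this) (by decide)
    exact hbne (Subtype.ext hc)
  have hsq₂ : g₂ * g₂ ∈ N := by
    have hbb : b * b = 1 := by
      rw [hb, ← _root_.map_mul, ← map_one e.symm]
      congr 1
      apply Subtype.ext; decide
    rw [← hQ1, _root_.map_mul, hg₂]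
    have := congrArg Subtype.val hbb
    push_cast at this
    exact this
  -- the commutator is central
  set k := g₁ * g₂ * g₁⁻¹ * g₂⁻¹ with hk
  have hkN : k ∈ N := by
    rw [← hQ1, hk]
    simp only [_root_.map_mul, _root_.map_inv, hg₁, hg₂]
    have h1 : a * b * a⁻¹ * b⁻¹ = 1 := by rw [hab]; group
    have := congrArg Subtype.val h1
    push_cast at this
    exact this
  obtain ⟨c, hc⟩ := (mem_center_iff_scalar k).mp hkN
  -- determinant of k is 1, so c^2 = 1
  have hdetk : (Matrix.GeneralLinearGroup.det k : ℂ) = 1 := by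
    rw [hk]
    simp only [_root_.map_mul, _root_.map_inv]
    rw [show ∀ x y : ℂˣ, x * y * x⁻¹ * y⁻¹ = 1 from fun x y => by
      rw [mul_comm x y]; group]
    rfl
  have hc2 : c ^ 2 = 1 := by
    have := congrArg Matrix.det hc
    rw [Matrix.det_smul, Matrix.det_one] at this
    have hdet' : Matrix.det (k : Matrix (Fin 2) (Fin 2) ℂ) = 1 := hdetk
    rw [hdet'] at this
    simpa using this.symm
  have hcase : c = 1 ∨ c = -1 := by
    have h0 : (c - 1) * (c + 1) = 0 := by linear_combination hc2
    rcases mul_eq_zero.mp h0 with h0 | h0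
    · left; linear_combination h0
    · right; linear_combination h0
  -- setup matrices
  obtain ⟨α, hα⟩ := (mem_center_iff_scalar (g₁ * g₁)).mp hsq
  obtain ⟨β, hβ⟩ := (mem_center_iff_scalar (g₂ * g₂)).mp hsq₂
  have hAs : ¬ ∃ c : ℂ, (g₁ : Matrix (Fin 2) (Fin 2) ℂ) = c • 1 :=
    fun hcon => hg₁N ((mem_center_iff_scalar g₁).mpr hcon)
  have hBs : ¬ ∃ c : ℂ, (g₂ : Matrix (Fin 2) (Fin 2) ℂ) = c • 1 :=
    fun hcon => hg₂N ((mem_center_iff_scalar g₂).mpr hcon)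
  rw [Units.val_mul] at hα hβ
  have hA2 := trace_zero _ α hα hAs
  have hB2 := trace_zero _ β hβ hBs
  -- rule out c = 1
  have hcneg : c = -1 := by
    rcases hcase with h1 | h1
    · exfalso
      rw [h1, one_smul] at hc
      have hk1 : k = 1 := Units.ext (by rw [hc]; rfl)
      have hcomm : g₁ * g₂ = g₂ * g₁ := by
        have h' : (g₁ * g₂) * (g₂ * g₁)⁻¹ = 1 := by rw [← hk1, hk]; group
        exact mul_inv_eq_one.mp h'
      have hcommM : (g₁ : Matrix (Fin 2) (Fin 2) ℂ) * g₂ = (g₂ : _) * g₁ := by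
        have := congrArg Units.val hcomm
        rwa [Units.val_mul, Units.val_mul] at this
      have hA0 : (g₁ : Matrix (Fin 2) (Fin 2) ℂ) ≠ 0 := by
        intro h0
        have h1' := g₁.mul_inv
        rw [h0, zero_mul] at h1'
        have := congrFun (congrFun h1' 0) 0
        simp at this
      obtain ⟨μ, hμ⟩ := prop_of_comm _ _ hA2 hB2 hcommM hA0
      -- then g₁⁻¹ * g₂ is central, contradicting a ≠ b
      have hcent : g₁⁻¹ * g₂ ∈ N := by
        apply (mem_center_iff_scalar _).mpr
        refine ⟨μ, ?_⟩
        rw [Units.val_mul, hμ, mul_smul_comm]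
        congr 1
        exact g₁.inv_mul
      have : Q g₁ = Q g₂ := by
        have h2 : Q (g₁⁻¹ * g₂) = 1 := (hQ1 _).mpr hcent
        rw [_root_.map_mul, _root_.map_inv] at h2
        exact (inv_mul_eq_one.mp h2)
      rw [hg₁, hg₂] at this
      exact habne (Subtype.ext this)
    · exact h1
  -- conclude k = -1
  rw [hcneg] at hc
  have hkneg : k = -1 := by
    apply Units.ext
    rw [hc, Units.val_neg, Units.val_one, neg_smul, one_smul]
  have hmem : (-1 : GL (Fin 2) ℂ) ∈ H := by
    rw [← hkneg, hk]
    exact mul_mem (mul_mem (mul_mem hg₁H hg₂H) (inv_mem hg₁H)) (inv_mem hg₂H)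
  refine ⟨hmem, ?_⟩
  -- the order-2 central element
  set x : H := ⟨-1, hmem⟩ with hx
  have hxc : x ∈ Subgroup.center H := by
    rw [Subgroup.mem_center_iff]
    intro g
    apply Subtype.ext
    show (g : GL (Fin 2) ℂ) * (-1) = (-1) * g
    rw [mul_neg_one, neg_one_mul]
  refine ⟨⟨x, hxc⟩, ?_⟩
  have hx1 : x ≠ 1 := by
    intro hc'
    have := congrArg (Subtype.val) hc'
    rw [hx] at this
    have h2 := congrArg Units.val this
    rw [Units.val_neg, Units.val_one] at h2
    have := congrFun (congrFun h2 0) 0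
    simp [Matrix.one_apply] at this
    exact absurd this (by norm_num)
  have hxsq : x ^ 2 = 1 := by
    apply Subtype.ext
    rw [SubmonoidClass.coe_pow]
    show (-1 : GL (Fin 2) ℂ) ^ 2 = 1
    rw [neg_one_sq]
  exact orderOf_eq_prime hxsq hx1
end

section
/- Let V be a finite-dimensional complex vector space and let E be an abelian subgroup of GL(V). Suppose K is a subgroup of E of finite index in E such that every element of K is a diagonalizable linear operator. Then every element of E is diagonalizable, and consequently E is simultaneously diagonalizable: there exists a basis of V with respect to which every element of E is represented by a diagonal matrix. -/
/-- A linear operator on a complex vector space is diagonalizable if the space admits a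
(finite) basis of eigenvectors of the operator. -/
def IsDiagonalizable {V : Type*} [AddCommGroup V] [Module ℂ V] (f : V →ₗ[ℂ] V) : Prop :=
  ∃ (n : ℕ) (b : Module.Basis (Fin n) ℂ V), ∀ i, ∃ c : ℂ, f (b i) = c • b i

/-!
For `g ∈ E` some power `g ^ m` with `0 < m ≤ [E : K]` lies in `K`, so it is semisimple and its
minimal polynomial `p` is separable with `p 0 ≠ 0` (`g` is invertible). In characteristic zero
`p (X ^ m)` is then separable as well, and it annihilates `g`, so `g` is semisimple. A commuting
family of semisimple operators on a finite-dimensional complex space is simultaneously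
diagonalizable: the joint generalized eigenspaces decompose the space, and on each of them
every operator acts by a scalar.
-/

open Polynomial

theorem Polynomial.Separable.expand {K : Type*} [Field K] {p : K[X]} (hp : p.Separable)
    (h0 : p.coeff 0 ≠ 0) {m : ℕ} (hm : (m : K) ≠ 0) : (Polynomial.expand K m p).Separable := by
  have hX : IsCoprime (Polynomial.expand K m p) X := by
    refine (irreducible_X.coprime_iff_not_dvd.mpr ?_).symm
    rwa [X_dvd_iff, coeff_expand (Nat.pos_of_ne_zero (by rintro rfl; simp at hm)),
      if_pos (dvd_zero m), Nat.zero_div]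
  have hmC : IsUnit (m : K[X]) := by
    rw [← C_eq_natCast]
    exact isUnit_C.mpr hm.isUnit
  rw [separable_def, derivative_expand]
  exact (IsCoprime.map hp (Polynomial.expand K m : K[X] →+* K[X])).mul_right
    ((isCoprime_mul_unit_left_right hmC _ _).mpr hX.pow_right)

namespace Module.End

variable {K V : Type*} [Field K] [AddCommGroup V] [Module K V]

theorem isSemisimple_of_basis_eigenvectors {ι : Type*} [Fintype ι] {f : End K V}
    (b : Basis ι K V) (hb : ∀ i, ∃ c : K, f (b i) = c • b i) : f.IsSemisimple := by
  classical
  choose c hc using hb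
  have hsep : (∏ μ ∈ Finset.univ.image c, (X - C μ)).Separable :=
    separable_prod_X_sub_C_iff'.mpr fun _ _ _ _ h ↦ h
  have hp : aeval f (∏ μ ∈ Finset.univ.image c, (X - C μ)) = 0 := by
    refine b.ext fun i ↦ ?_
    have hi : c i ∈ Finset.univ.image c := Finset.mem_image_of_mem c (Finset.mem_univ i)
    -- move the factor `X - C (c i)`, which kills `b i`, to the front of the product
    rw [← Finset.prod_erase_mul _ _ hi, map_mul, mul_apply, map_sub, aeval_X, aeval_C,
      LinearMap.sub_apply, algebraMap_end_apply, hc i, sub_self, map_zero, LinearMap.zero_apply]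
  exact isSemisimple_of_squarefree_aeval_eq_zero hsep.squarefree hp

theorem IsSemisimple.of_pow [PerfectField K] [FiniteDimensional K V] {f : End K V}
    (hf : Function.Injective f) {m : ℕ} (hm : (m : K) ≠ 0) (h : (f ^ m).IsSemisimple) :
    f.IsSemisimple := by
  have hsep : (minpoly K (f ^ m)).Separable :=
    PerfectField.separable_iff_squarefree.mpr h.minpoly_squarefree
  have h0 : (minpoly K (f ^ m)).coeff 0 ≠ 0 := by
    refine LinearMap.minpoly_coeff_zero_of_injective ?_
    rw [coe_pow]
    exact hf.iterate m
  refine isSemisimple_of_squarefree_aeval_eq_zero (hsep.expand h0 hm).squarefree ?_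
  rw [expand_aeval, minpoly.aeval]

theorem exists_basis_eigenvectors_of_commute [IsAlgClosed K] [FiniteDimensional K V]
    {ι : Type*} (F : ι → End K V) (hcomm : ∀ i j, Commute (F i) (F j))
    (hss : ∀ i, (F i).IsSemisimple) :
    ∃ (n : ℕ) (b : Basis (Fin n) K V), ∀ i j, ∃ c : K, F i (b j) = c • b j := by
  classical
  let W (χ : ι → K) : Submodule K V := ⨅ i, (F i).maxGenEigenspace (χ i)
  have hW : DirectSum.IsInternal W :=
    DirectSum.isInternal_submodule_of_iSupIndep_of_iSup_eq_top
      (independent_iInf_maxGenEigenspace_of_forall_mapsTo F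
        fun i j μ ↦ mapsTo_maxGenEigenspace_of_comm (hcomm j i) μ)
      (iSup_iInf_maxGenEigenspace_eq_top_of_iSup_maxGenEigenspace_eq_top_of_commute F
        (fun i j _ ↦ hcomm i j) fun i ↦ iSup_maxGenEigenspace_eq_top (F i))
  let B := hW.collectedBasis fun χ ↦ Module.finBasis K (W χ)
  have := Module.Finite.finite_basis B
  refine ⟨_, B.reindex (Finite.equivFin _), fun i j ↦ ?_⟩
  set σ := (Finite.equivFin _).symm j
  refine ⟨σ.1 i, ?_⟩
  have hσ : B σ ∈ (F i).maxGenEigenspace (σ.1 i) :=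
    (Submodule.mem_iInf _).mp (hW.collectedBasis_mem _ σ) i
  rw [(hss i).isFinitelySemisimple.maxGenEigenspace_eq_eigenspace, mem_eigenspace_iff] at hσ
  rwa [Basis.reindex_apply]

end Module.End

theorem IsDiagonalizable.isSemisimple {V : Type*} [AddCommGroup V] [Module ℂ V]
    {f : Module.End ℂ V} (hf : IsDiagonalizable f) : f.IsSemisimple := by
  obtain ⟨_, b, hb⟩ := hf
  exact Module.End.isSemisimple_of_basis_eigenvectors b hb

theorem stmt14_general {V : Type*} [AddCommGroup V] [Module ℂ V] [FiniteDimensional ℂ V]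
    (E K : Subgroup (V →ₗ[ℂ] V)ˣ)
    (hcomm : ∀ a ∈ E, ∀ b ∈ E, a * b = b * a)
    (hindex : (K.subgroupOf E).FiniteIndex)
    (hdiag : ∀ k ∈ K, IsDiagonalizable (k : V →ₗ[ℂ] V)) :
    (∀ g ∈ E, IsDiagonalizable (g : V →ₗ[ℂ] V)) ∧
    ∃ (n : ℕ) (b : Module.Basis (Fin n) ℂ V),
      ∀ g ∈ E, ∀ i, ∃ c : ℂ, (g : V →ₗ[ℂ] V) (b i) = c • b i := by
  have hss (g) (hg : g ∈ E) : Module.End.IsSemisimple (g : V →ₗ[ℂ] V) := by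
    obtain ⟨m, hm, -, hgm⟩ :=
      Subgroup.exists_pow_mem_of_relIndex_ne_zero hindex.index_ne_zero hg
    have hpow : Module.End.IsSemisimple ((g : V →ₗ[ℂ] V) ^ m) := by
      rw [← Units.val_pow_eq_pow_val]
      exact (hdiag _ hgm.1).isSemisimple
    exact hpow.of_pow (Module.End.isUnit_iff _ |>.mp g.isUnit).injective
      (Nat.cast_ne_zero.mpr hm.ne')
  obtain ⟨n, b, hb⟩ := Module.End.exists_basis_eigenvectors_of_commute
    (fun g : E ↦ ((g : (V →ₗ[ℂ] V)ˣ) : V →ₗ[ℂ] V))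
    (fun g h ↦ congrArg Units.val (hcomm g g.2 h h.2)) fun g ↦ hss g g.2
  exact ⟨fun g hg ↦ ⟨n, b, hb ⟨g, hg⟩⟩, n, b, fun g hg ↦ hb ⟨g, hg⟩⟩

/-- Let `V` be a finite-dimensional complex vector space, `E` an abelian
subgroup of `GL(V)`, and `K ≤ E` a subgroup of finite index in `E` all of whose
elements are diagonalizable.  Then every element of `E` is diagonalizable, and `E` is
simultaneously diagonalizable: there is a basis of `V` in which every element of `E`
is diagonal. -/
theorem stmt14 {V : Type*} [AddCommGroup V] [Module ℂ V] [FiniteDimensional ℂ V]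
    (E K : Subgroup (V →ₗ[ℂ] V)ˣ) (hKE : K ≤ E)
    (hcomm : ∀ a ∈ E, ∀ b ∈ E, a * b = b * a)
    (hindex : (K.subgroupOf E).FiniteIndex)
    (hdiag : ∀ k ∈ K, IsDiagonalizable (k : V →ₗ[ℂ] V)) :
    (∀ g ∈ E, IsDiagonalizable (g : V →ₗ[ℂ] V)) ∧
    ∃ (n : ℕ) (b : Module.Basis (Fin n) ℂ V),
      ∀ g ∈ E, ∀ i, ∃ c : ℂ, (g : V →ₗ[ℂ] V) (b i) = c • b i :=
  stmt14_general E K hcomm hindex hdiag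
end
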